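/- arXiv:2009.07620 — 4 statements merged into one kernel-verified Lean document; each statement's English description precedes it below -/
import Mathlib

section
/- Let γ : [t₀,∞) → (0,∞) be nonincreasing and twice differentiable, and suppose γ''(t) ≥ c·γ(t)³ for all t ≥ t₀ for some constant c > 0. Then lim_{t→∞} γ(t) = 0. -/
open Real Filter

theorem stmt_8 (t₀ c : ℝ) (hc : 0 < c) (γ : ℝ → ℝ)
    (hγ2 : ∀ t ≥ t₀, DifferentiableAt ℝ γ t ∧ DifferentiableAt ℝ (deriv γ) t)
    (hpos : ∀ t ≥ t₀, 0 < γ t)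
    (hdec : ∀ t ≥ t₀, deriv γ t ≤ 0)
    (hineq : ∀ t ≥ t₀, deriv (deriv γ) t ≥ c * γ t ^ 3) :
    Filter.Tendsto γ Filter.atTop (nhds 0) := by
  -- γ is antitone on Ici t₀
  have hcontγ : ContinuousOn γ (Set.Ici t₀) := fun t ht =>
    ((hγ2 t ht).1.continuousAt).continuousWithinAt
  have hanti : AntitoneOn γ (Set.Ici t₀) := by
    apply antitoneOn_of_deriv_nonpos (convex_Ici t₀) hcontγ
    · intro t ht
      rw [interior_Ici] at ht
      exact ((hγ2 t (le_of_lt ht)).1).differentiableWithinAt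
    · intro t ht
      rw [interior_Ici] at ht
      exact hdec t (le_of_lt ht)
  -- auxiliary globally antitone function
  set g : ℝ → ℝ := fun t => γ (max t t₀) with hg
  have hganti : Antitone g := by
    intro s t hst
    exact hanti (Set.mem_Ici.2 (le_max_right s t₀)) (Set.mem_Ici.2 (le_max_right t t₀))
      (max_le_max hst le_rfl)
  have hgpos : ∀ t, 0 < g t := fun t => hpos _ (le_max_right t t₀)
  have hbdd : BddBelow (Set.range g) := ⟨0, by rintro x ⟨t, rfl⟩; exact (hgpos t).le⟩
  have hL : Tendsto g atTop (nhds (⨅ t, g t)) := tendsto_atTop_ciInf hganti hbdd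
  set L := ⨅ t, g t with hLdef
  have hL0 : 0 ≤ L := le_ciInf fun t => (hgpos t).le
  have heq : γ =ᶠ[atTop] g := by
    filter_upwards [eventually_ge_atTop t₀] with t ht
    simp [hg, max_eq_left ht]
  -- γ t ≥ L for t ≥ t₀
  have hge : ∀ t ≥ t₀, L ≤ γ t := by
    intro t ht
    have := ciInf_le hbdd t
    rwa [show g t = γ t by simp [hg, max_eq_left ht]] at this
  rcases eq_or_lt_of_le hL0 with h0 | hLpos
  · rw [← h0] at hL
    exact Tendsto.congr' heq.symm hL
  · exfalso
    -- deriv (deriv γ) ≥ c * L^3 on Ici t₀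
    have hC : ∀ t ∈ interior (Set.Ici t₀), c * L ^ 3 ≤ deriv (deriv γ) t := by
      intro t ht
      rw [interior_Ici] at ht
      have ht' := le_of_lt (Set.mem_Ioi.1 ht)
      have : L ^ 3 ≤ γ t ^ 3 := pow_le_pow_left₀ hL0 (hge t ht') 3
      calc c * L ^ 3 ≤ c * γ t ^ 3 := by nlinarith
        _ ≤ deriv (deriv γ) t := hineq t ht'
    have hcont' : ContinuousOn (deriv γ) (Set.Ici t₀) := fun t ht =>
      ((hγ2 t ht).2.continuousAt).continuousWithinAt
    have key := (convex_Ici t₀).mul_sub_le_image_sub_of_le_deriv hcont' (fun t ht => by rw [interior_Ici] at ht; exact ((hγ2 t (le_of_lt ht)).2).differentiableWithinAt) (by rw [interior_Ici] at hC ⊢; exact hC)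
    set C := c * L ^ 3 with hCdef
    have hCpos : 0 < C := by positivity
    set t₁ := t₀ + (1 - deriv γ t₀) / C with ht₁
    have ht₁ge : t₀ ≤ t₁ := by
      have : 0 ≤ (1 - deriv γ t₀) / C := by
        apply div_nonneg _ hCpos.le
        have := hdec t₀ le_rfl
        linarith
      rw [ht₁]; linarith
    have := key t₀ Set.self_mem_Ici t₁ (Set.mem_Ici.2 ht₁ge) ht₁ge
    have h2 : C * (t₁ - t₀) = 1 - deriv γ t₀ := by
      rw [ht₁]; field_simp; ring
    have := hdec t₁ ht₁ge
    linarith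
end

section
/- Let γ : [t₀,∞) → (0,∞) be nonincreasing, twice continuously differentiable, with lim_{t→∞} γ(t) = 0, and suppose γ''(t) ≥ 2k²·γ(t)³ for all t ≥ t₀, where k > 0. Then −γ'(t) ≥ k·γ(t)² for all t ≥ t₀. -/
open Real Filter

theorem stmt_9 (t₀ k : ℝ) (hk : 0 < k) (γ : ℝ → ℝ)
    (hγ2 : ∀ t ≥ t₀, DifferentiableAt ℝ γ t ∧ DifferentiableAt ℝ (deriv γ) t)
    (hcont : ContinuousOn (deriv (deriv γ)) (Set.Ici t₀))
    (hpos : ∀ t ≥ t₀, 0 < γ t)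
    (hdec : ∀ t ≥ t₀, deriv γ t ≤ 0)
    (hlim : Filter.Tendsto γ Filter.atTop (nhds 0))
    (hineq : ∀ t ≥ t₀, deriv (deriv γ) t ≥ 2 * k ^ 2 * γ t ^ 3) :
    ∀ t ≥ t₀, -deriv γ t ≥ k * γ t ^ 2 := by
  set E : ℝ → ℝ := fun t => (deriv γ t) ^ 2 - k ^ 2 * (γ t) ^ 4 with hE_def
  have hE' : ∀ x ≥ t₀, HasDerivAt E
      (2 * deriv γ x * deriv (deriv γ) x - k ^ 2 * (4 * γ x ^ 3 * deriv γ x)) x := by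
    intro x hx
    have h1 : HasDerivAt (deriv γ) (deriv (deriv γ) x) x := (hγ2 x hx).2.hasDerivAt
    have h2 : HasDerivAt γ (deriv γ x) x := (hγ2 x hx).1.hasDerivAt
    have h1' : HasDerivAt (fun t => (deriv γ t) ^ 2)
        (2 * deriv γ x * deriv (deriv γ) x) x := by
      have := h1.pow 2
      simp at this
      exact this
    have h2' : HasDerivAt (fun t => k ^ 2 * (γ t) ^ 4)
        (k ^ 2 * (4 * γ x ^ 3 * deriv γ x)) x := by
      have := (h2.pow 4).const_mul (k ^ 2)
      simpa [mul_assoc, mul_comm, mul_left_comm] using this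
    exact h1'.sub h2'
  have hanti : AntitoneOn E (Set.Ici t₀) := by
    apply antitoneOn_of_deriv_nonpos (convex_Ici t₀)
    · intro x hx
      exact ((hE' x hx).differentiableAt).continuousAt.continuousWithinAt
    · intro x hx
      rw [interior_Ici] at hx
      exact ((hE' x (le_of_lt hx)).differentiableAt).differentiableWithinAt
    · intro x hx
      rw [interior_Ici] at hx
      have hx' : x ≥ t₀ := le_of_lt hx
      rw [(hE' x hx').deriv]
      have h1 : deriv γ x ≤ 0 := hdec x hx'
      have h2 : deriv (deriv γ) x - 2 * k ^ 2 * γ x ^ 3 ≥ 0 := by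
        have := hineq x hx'; linarith
      nlinarith [mul_nonneg (neg_nonneg.mpr h1) h2]
  have hEnonneg : ∀ t ≥ t₀, 0 ≤ E t := by
    intro t ht
    have htend : Tendsto (fun s => -(k ^ 2) * (γ s) ^ 4) atTop (nhds 0) := by
      have : Tendsto (fun s => -(k ^ 2) * (γ s) ^ 4) atTop (nhds (-(k ^ 2) * 0 ^ 4)) :=
        ((hlim.pow 4).const_mul _)
      simpa using this
    refine le_of_tendsto htend ?_
    filter_upwards [eventually_ge_atTop t] with s hs
    have hs' : s ≥ t₀ := le_trans ht hs
    have h1 : E s ≤ E t := hanti (Set.mem_Ici.mpr ht) (Set.mem_Ici.mpr hs') hs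
    have h2 : -(k ^ 2) * (γ s) ^ 4 ≤ E s := by
      have := sq_nonneg (deriv γ s)
      simp only [hE_def]; linarith
    linarith
  intro t ht
  have h0 : 0 ≤ E t := hEnonneg t ht
  have h1 : deriv γ t ≤ 0 := hdec t ht
  have h2 : 0 < γ t := hpos t ht
  have h3 : 0 < k * γ t ^ 2 := by positivity
  simp only [hE_def] at h0
  nlinarith [h0, h1, h3]
end

section
/- Let μ > 0, 0 < q < 1, α = μq, γ(t) = α/t^{1−q}, b(t) = e^{μt^q}, σ(t) = m·γ(t) + b'(t)/(3b(t)) with parameters 0 < r ≤ 1/3 and 2r ≤ m ≤ 1−r. Then for all t > 0: (1/2)σ''(t) + σ(t)·(σ(t) − (m+r)γ(t))·(2σ(t) + (1 − 2(m+r))γ(t)) = (μq)³(m + 1/3)(1/3 − r)(5/3 − 2r)·t^{3q−3} + (1/2)μq(m + 1/3)(1−q)(2−q)·t^{q−3} ≥ 0. -/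
open Real

lemma aux_deriv (c p : ℝ) {t : ℝ} (ht : 0 < t) :
    deriv (fun x : ℝ => c * x ^ p) t = c * p * t ^ (p - 1) := by
  have h : HasDerivAt (fun x : ℝ => c * x ^ p) (c * (p * t ^ (p - 1))) t :=
    ((Real.hasDerivAt_rpow_const (Or.inl ht.ne'))).const_mul c
  rw [h.deriv]; ring

lemma aux_deriv2 (c p : ℝ) {t : ℝ} (ht : 0 < t) :
    deriv (deriv (fun x : ℝ => c * x ^ p)) t = c * p * (p - 1) * t ^ (p - 2) := by
  have hev : deriv (fun x : ℝ => c * x ^ p) =ᶠ[nhds t] fun x => c * p * x ^ (p - 1) := by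
    filter_upwards [IsOpen.mem_nhds isOpen_Ioi (Set.mem_Ioi.mpr ht)] with x hx
    exact aux_deriv c p hx
  rw [hev.deriv_eq, aux_deriv (c * p) (p - 1) ht]
  ring_nf

theorem stmt_10 (μ q r m : ℝ) (hμ : 0 < μ) (hq0 : 0 < q) (hq1 : q < 1)
    (hr0 : 0 < r) (hr : r ≤ 1 / 3) (hm1 : 2 * r ≤ m) (hm2 : m ≤ 1 - r)
    (γ σ : ℝ → ℝ)
    (hγ : ∀ t, γ t = μ * q * t ^ (q - 1))
    (hσ : ∀ t, σ t = (m + 1 / 3) * μ * q * t ^ (q - 1)) :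
    ∀ t > (0 : ℝ),
      (1 / 2) * deriv (deriv σ) t +
        σ t * (σ t - (m + r) * γ t) * (2 * σ t + (1 - 2 * (m + r)) * γ t) =
      (μ * q) ^ 3 * (m + 1 / 3) * (1 / 3 - r) * (5 / 3 - 2 * r) * t ^ (3 * q - 3) +
        (1 / 2) * μ * q * (m + 1 / 3) * (1 - q) * (2 - q) * t ^ (q - 3) ∧
      (0 : ℝ) ≤ (μ * q) ^ 3 * (m + 1 / 3) * (1 / 3 - r) * (5 / 3 - 2 * r) * t ^ (3 * q - 3) +
        (1 / 2) * μ * q * (m + 1 / 3) * (1 - q) * (2 - q) * t ^ (q - 3) := by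
  intro t ht
  have hσf : σ = fun x : ℝ => ((m + 1 / 3) * μ * q) * x ^ (q - 1) := by
    funext x; rw [hσ x]
  have hdd : deriv (deriv σ) t
      = ((m + 1 / 3) * μ * q) * (q - 1) * (q - 1 - 1) * t ^ (q - 1 - 2) := by
    rw [hσf]; exact aux_deriv2 _ _ ht
  have h3 : t ^ (3 * q - 3) = (t ^ (q - 1)) ^ 3 := by
    rw [← Real.rpow_natCast (t ^ (q - 1)) 3, ← Real.rpow_mul ht.le]
    norm_num; ring_nf
  have h2 : t ^ (q - 3) = t ^ (q - 1) / t ^ 2 := by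
    rw [show q - 3 = (q - 1) - 2 by ring, Real.rpow_sub ht, Real.rpow_two]
  have h2' : t ^ (q - 1 - 2) = t ^ (q - 1) / t ^ 2 := by
    rw [Real.rpow_sub ht, Real.rpow_two]
  constructor
  · rw [hdd, hσ, hγ, h3, h2, h2']
    field_simp
    ring
  · have hA : (0 : ℝ) < t ^ (3 * q - 3) := Real.rpow_pos_of_pos ht _
    have hB : (0 : ℝ) < t ^ (q - 3) := Real.rpow_pos_of_pos ht _
    have hmq : (0 : ℝ) < μ * q := mul_pos hμ hq0
    have hm0 : (0 : ℝ) ≤ m + 1 / 3 := by linarith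
    apply add_nonneg
    · have h1 : (0 : ℝ) ≤ 1 / 3 - r := by linarith
      have h5 : (0 : ℝ) ≤ 5 / 3 - 2 * r := by linarith
      positivity
    · have h1 : (0 : ℝ) ≤ 1 - q := by linarith
      have h5 : (0 : ℝ) ≤ 2 - q := by linarith
      positivity
end

section
/- Let γ(t) = 1/(t·(ln t)^ρ) on [e,∞) with 0 ≤ ρ ≤ 1. Then for every r ≤ 1 and t ≥ e, the inequality γ''(t) ≥ 2r²·γ(t)³ holds; equivalently, 2(ln t)² + 3ρ·ln t + ρ(ρ+1) ≥ 2r²·(ln t)^{2(1−ρ)}. -/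
open Real

lemma d1 (ρ : ℝ) {t : ℝ} (ht : 1 < t) :
    HasDerivAt (fun s => 1 / (s * Real.log s ^ ρ))
      (-((Real.log t + ρ) / (t ^ 2 * Real.log t ^ (ρ + 1)))) t := by
  have ht0 : (0:ℝ) < t := lt_trans one_pos ht
  have hL : 0 < Real.log t := Real.log_pos ht
  have hLρ : (0:ℝ) < Real.log t ^ ρ := Real.rpow_pos_of_pos hL ρ
  have h1 : HasDerivAt (fun s => Real.log s ^ ρ)
      ((ρ * Real.log t ^ (ρ - 1)) * t⁻¹) t :=
    (Real.hasDerivAt_rpow_const (x := Real.log t) (p := ρ) (Or.inl hL.ne')).comp t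
      (Real.hasDerivAt_log ht0.ne')
  have h2 : HasDerivAt (fun s => s * Real.log s ^ ρ)
      (1 * Real.log t ^ ρ + t * ((ρ * Real.log t ^ (ρ - 1)) * t⁻¹)) t :=
    (hasDerivAt_id t).mul h1
  have hden : t * Real.log t ^ ρ ≠ 0 := by positivity
  have h3 : HasDerivAt (fun s => (s * Real.log s ^ ρ)⁻¹) _ t := h2.inv hden
  have hfe : (fun s : ℝ => (s * Real.log s ^ ρ)⁻¹) = fun s => 1 / (s * Real.log s ^ ρ) := by
    funext s; rw [one_div]
  rw [hfe] at h3
  convert h3 using 1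
  set L := Real.log t with hLdef
  have e1 : L ^ ρ = L ^ (ρ - 1) * L := by
    rw [show ρ = ρ - 1 + 1 by ring, Real.rpow_add_one hL.ne']
    ring_nf
  have e2 : L ^ (ρ + 1) = L ^ ρ * L := Real.rpow_add_one hL.ne' ρ
  have hLρ1 : (0:ℝ) < L ^ (ρ - 1) := Real.rpow_pos_of_pos hL _
  rw [e2, e1]
  field_simp

lemma d2 (ρ : ℝ) {t : ℝ} (ht : 1 < t) :
    HasDerivAt (fun s => -((Real.log s + ρ) / (s ^ 2 * Real.log s ^ (ρ + 1))))
      ((2 * Real.log t ^ 2 + 3 * ρ * Real.log t + ρ * (ρ + 1)) /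
        (t ^ 3 * Real.log t ^ (ρ + 2))) t := by
  have ht0 : (0:ℝ) < t := lt_trans one_pos ht
  have hL : 0 < Real.log t := Real.log_pos ht
  have hu : HasDerivAt (fun s => Real.log s + ρ) t⁻¹ t :=
    (Real.hasDerivAt_log ht0.ne').add_const ρ
  have hpow : HasDerivAt (fun s => Real.log s ^ (ρ + 1))
      (((ρ + 1) * Real.log t ^ (ρ + 1 - 1)) * t⁻¹) t :=
    (Real.hasDerivAt_rpow_const (x := Real.log t) (p := ρ + 1) (Or.inl hL.ne')).comp t
      (Real.hasDerivAt_log ht0.ne')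
  have hsq : HasDerivAt (fun s : ℝ => s ^ 2) (2 * t) t := by
    simpa using (hasDerivAt_pow 2 t)
  have hv : HasDerivAt (fun s => s ^ 2 * Real.log s ^ (ρ + 1))
      (2 * t * Real.log t ^ (ρ + 1) + t ^ 2 * (((ρ + 1) * Real.log t ^ (ρ + 1 - 1)) * t⁻¹)) t :=
    hsq.mul hpow
  have hvne : t ^ 2 * Real.log t ^ (ρ + 1) ≠ 0 := by positivity
  have h : HasDerivAt (fun s => -((Real.log s + ρ) / (s ^ 2 * Real.log s ^ (ρ + 1)))) _ t :=
    ((hu.div hv hvne)).neg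
  convert h using 1
  set L := Real.log t with hLdef
  have hLρ : (0:ℝ) < L ^ ρ := Real.rpow_pos_of_pos hL _
  have e1 : L ^ (ρ + 1) = L ^ ρ * L := Real.rpow_add_one hL.ne' ρ
  have e2 : L ^ (ρ + 2) = L ^ ρ * L * L := by
    rw [show ρ + 2 = ρ + 1 + 1 by ring, Real.rpow_add_one hL.ne', e1]
  have e3 : L ^ (ρ + 1 - 1) = L ^ ρ := by norm_num
  rw [e1, e2, e3]
  field_simp
  ring

theorem stmt_14 (ρ r : ℝ) (hρ0 : 0 ≤ ρ) (hρ1 : ρ ≤ 1) (hr0 : 0 < r) (hr1 : r ≤ 1)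
    (γ : ℝ → ℝ)
    (hγ : ∀ t, γ t = 1 / (t * Real.log t ^ ρ)) :
    ∀ t ≥ Real.exp 1,
      deriv (deriv γ) t ≥ 2 * r ^ 2 * γ t ^ 3 ∧
      2 * Real.log t ^ 2 + 3 * ρ * Real.log t + ρ * (ρ + 1) ≥
        2 * r ^ 2 * Real.log t ^ (2 * (1 - ρ)) := by
  have hγ' : γ = fun s => 1 / (s * Real.log s ^ ρ) := funext hγ
  subst hγ'
  intro t ht
  have he1 : (1:ℝ) < Real.exp 1 := by
    have := Real.add_one_le_exp (1:ℝ); linarith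
  have ht1 : (1:ℝ) < t := lt_of_lt_of_le he1 ht
  have ht0 : (0:ℝ) < t := lt_trans one_pos ht1
  have hL : 0 < Real.log t := Real.log_pos ht1
  have hL1 : (1:ℝ) ≤ Real.log t := by
    have : Real.log (Real.exp 1) ≤ Real.log t :=
      Real.log_le_log (Real.exp_pos 1) ht
    simpa using this
  set L := Real.log t with hLdef
  -- the key polynomial inequality
  have key : 2 * r ^ 2 * L ^ (2 * (1 - ρ)) ≤ 2 * L ^ 2 + 3 * ρ * L + ρ * (ρ + 1) := by
    have h1 : L ^ (2 * (1 - ρ)) ≤ L ^ (2:ℝ) :=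
      Real.rpow_le_rpow_of_exponent_le hL1 (by nlinarith)
    have h2 : L ^ (2:ℝ) = L ^ 2 := by
      rw [show (2:ℝ) = ((2:ℕ):ℝ) by norm_num, Real.rpow_natCast]
    have h3 : (0:ℝ) ≤ L ^ (2 * (1 - ρ)) := Real.rpow_nonneg hL.le _
    have h4 : r ^ 2 ≤ 1 := by nlinarith
    have h5 : 0 ≤ (1 - r ^ 2) * L ^ (2 * (1 - ρ)) :=
      mul_nonneg (by linarith) h3
    rw [h2] at h1
    nlinarith [h5, h1, mul_nonneg hρ0 hL.le, mul_nonneg hρ0 (by linarith : (0:ℝ) ≤ ρ + 1)]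
  refine ⟨?_, key⟩
  -- identify the second derivative
  have hmem : {s : ℝ | 1 < s} ∈ nhds t :=
    (isOpen_lt continuous_const continuous_id).mem_nhds ht1
  have hev : deriv (fun s => 1 / (s * Real.log s ^ ρ)) =ᶠ[nhds t]
      (fun s => -((Real.log s + ρ) / (s ^ 2 * Real.log s ^ (ρ + 1)))) :=
    Filter.eventuallyEq_of_mem hmem (fun s hs => (d1 ρ hs).deriv)
  have hd2 : deriv (deriv (fun s => 1 / (s * Real.log s ^ ρ))) t =
      (2 * L ^ 2 + 3 * ρ * L + ρ * (ρ + 1)) / (t ^ 3 * L ^ (ρ + 2)) := by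
    rw [Filter.EventuallyEq.deriv_eq hev]
    exact (d2 ρ ht1).deriv
  rw [hd2]
  -- rewrite the RHS
  have hrhs : 2 * r ^ 2 * (1 / (t * L ^ ρ)) ^ 3 =
      (2 * r ^ 2 * L ^ (2 * (1 - ρ))) / (t ^ 3 * L ^ (ρ + 2)) := by
    have hLρ : (0:ℝ) < L ^ ρ := Real.rpow_pos_of_pos hL _
    have hLa : (0:ℝ) < L ^ (2 * (1 - ρ)) := Real.rpow_pos_of_pos hL _
    have hLb : (0:ℝ) < L ^ (ρ + 2) := Real.rpow_pos_of_pos hL _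
    have e1 : (L ^ ρ) ^ 3 = L ^ (ρ * 3) := by
      rw [← Real.rpow_natCast (L ^ ρ) 3, ← Real.rpow_mul hL.le]
      norm_num
    have e2 : L ^ (2 * (1 - ρ)) * L ^ (ρ * 3) = L ^ (ρ + 2) := by
      rw [← Real.rpow_add hL]; ring_nf
    rw [div_pow, one_pow, mul_pow, e1, ← e2]
    field_simp
  simp only [← hLdef, hrhs]
  rw [ge_iff_le, div_le_div_iff_of_pos_right (by positivity)]
  exact key
end
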